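/- Let Â : [0,T] → ℝ^{(n+m)×(n+m)} be the continuous block-matrix function Â(t) = [[A(t)+B(t)Φ₀, B(t)], [−(Φ₀A(t)+C(t)Φ₀+Φ₀B(t)Φ₀+D(t)), −(C(t)+Φ₀B(t))]]. Let Ξ : [0,T] → ℝ^{(n+m)×(n+m)} be a differentiable function with Ξ'(t) = −Ξ(t)Â(t) for all t ∈ [0,T] and Ξ(T) = I (so Ξ(t) equals the state transition matrix Ψ(T,t) of the linear system Ψ'(·,s) = Â(·)Ψ(·,s), Ψ(s,s) = I). Write Ξ₂₁(t) ∈ ℝ^{m×n} and Ξ₂₂(t) ∈ ℝ^{m×m} for the lower-left and lower-right blocks of Ξ(t). If Ξ₂₂(t) is invertible for every t ∈ [0,T], then φ(t) := Φ₀ − Ξ₂₂(t)⁻¹ · Ξ₂₁(t) is differentiable on [0,T] and satisfies the Riccati terminal value problem: φ'(t) + φ(t)A(t) + C(t)φ(t) + φ(t)B(t)φ(t) + D(t) = 0 for all t ∈ [0,T] and φ(T) = Φ₀. (Paper's Proposition 2.3.) -/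

import Mathlib

open Set Matrix

attribute [local instance] Matrix.normedAddCommGroup Matrix.normedSpace

theorem matrix_hasDerivAt_iff {ι κ : Type*} [Fintype ι] [Fintype κ]
    {f : ℝ → Matrix ι κ ℝ} {f' : Matrix ι κ ℝ} {t : ℝ} :
    HasDerivAt f f' t ↔ ∀ i j, HasDerivAt (fun s => f s i j) (f' i j) t := by
  exact hasDerivAt_pi.trans (forall_congr' fun i => hasDerivAt_pi)

theorem HasDerivAt.matrix_mul {ι κ ρ : Type*} [Fintype ι] [Fintype κ] [Fintype ρ]
    {f : ℝ → Matrix ι κ ℝ} {g : ℝ → Matrix κ ρ ℝ} {f' : Matrix ι κ ℝ} {g' : Matrix κ ρ ℝ} {t : ℝ}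
    (hf : HasDerivAt f f' t) (hg : HasDerivAt g g' t) :
    HasDerivAt (fun s => f s * g s) (f' * g t + f t * g') t := by
  rw [matrix_hasDerivAt_iff] at hf hg ⊢
  intro i j
  simp only [Matrix.mul_apply, Matrix.add_apply]
  rw [← Finset.sum_add_distrib]
  refine HasDerivAt.congr_deriv (HasDerivAt.fun_sum fun k _ => ((hf i k).mul (hg k j))) ?_
  rfl

theorem matrix_differentiableAt_iff {ι κ : Type*} [Fintype ι] [Fintype κ]
    {f : ℝ → Matrix ι κ ℝ} {t : ℝ} :
    DifferentiableAt ℝ f t ↔ ∀ i j, DifferentiableAt ℝ (fun s => f s i j) t := by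
  constructor
  · intro h i j
    exact (matrix_hasDerivAt_iff.1 h.hasDerivAt i j).differentiableAt
  · intro h
    exact HasDerivAt.differentiableAt
      (matrix_hasDerivAt_iff (f' := Matrix.of fun i j => deriv (fun s => f s i j) t)
        |>.2 (fun i j => (h i j).hasDerivAt))

theorem det_differentiableAt {ι : Type*} [Fintype ι] [DecidableEq ι]
    {f : ℝ → Matrix ι ι ℝ} {t : ℝ} (hf : DifferentiableAt ℝ f t) :
    DifferentiableAt ℝ (fun s => (f s).det) t := by
  have h := matrix_differentiableAt_iff.1 hf
  have : (fun s => (f s).det)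
      = fun s => ∑ σ : Equiv.Perm ι, (Equiv.Perm.sign σ : ℝ) * ∏ i, f s (σ i) i := by
    funext s; rw [Matrix.det_apply']
  rw [this]
  exact DifferentiableAt.fun_sum fun σ _ =>
    (DifferentiableAt.fun_finsetProd fun i _ => h (σ i) i).const_mul _

theorem adjugate_differentiableAt {ι : Type*} [Fintype ι] [DecidableEq ι]
    {f : ℝ → Matrix ι ι ℝ} {t : ℝ} (hf : DifferentiableAt ℝ f t) :
    DifferentiableAt ℝ (fun s => (f s).adjugate) t := by
  have h := matrix_differentiableAt_iff.1 hf
  rw [matrix_differentiableAt_iff]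
  intro i j
  have : (fun s => (f s).adjugate i j)
      = fun s => ((f s).updateRow j (Pi.single i 1)).det := by
    funext s; rw [Matrix.adjugate_apply]
  rw [this]
  refine det_differentiableAt (matrix_differentiableAt_iff.2 fun a b => ?_)
  by_cases hab : a = j
  · subst hab
    simp only [Matrix.updateRow_self]
    exact differentiableAt_const _
  · simp only [Matrix.updateRow_ne hab]
    exact h a b

theorem hasDerivAt_matrix_inv {ι : Type*} [Fintype ι] [DecidableEq ι]
    {f : ℝ → Matrix ι ι ℝ} {f' : Matrix ι ι ℝ} {t : ℝ}
    (hf : HasDerivAt f f' t) (hu : IsUnit (f t)) :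
    HasDerivAt (fun s => (f s)⁻¹) (-((f t)⁻¹ * f' * (f t)⁻¹)) t := by
  have dne : (f t).det ≠ 0 := by
    have := (Matrix.isUnit_iff_isUnit_det _).1 hu
    exact IsUnit.ne_zero (by simpa using this)
  set d : ℝ → ℝ := fun s => (f s).det with hd_def
  set a : ℝ → Matrix ι ι ℝ := fun s => (f s).adjugate with ha_def
  have hd : HasDerivAt d (deriv d t) t :=
    (det_differentiableAt hf.differentiableAt).hasDerivAt
  have ha : HasDerivAt a (deriv a t) t :=
    (adjugate_differentiableAt hf.differentiableAt).hasDerivAt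
  set d' := deriv d t
  set a' := deriv a t
  have key : a' * f t + a t * f' = d' • (1 : Matrix ι ι ℝ) := by
    have h1 : HasDerivAt (fun s => a s * f s) (a' * f t + a t * f') t := ha.matrix_mul hf
    have h2 : HasDerivAt (fun s => d s • (1 : Matrix ι ι ℝ)) (d' • (1 : Matrix ι ι ℝ)) t :=
      hd.smul_const _
    have heq : (fun s => a s * f s) = fun s => d s • (1 : Matrix ι ι ℝ) := by
      funext s; exact Matrix.adjugate_mul (f s)
    exact h1.unique (heq ▸ h2)
  have hmulinv : f t * (f t)⁻¹ = 1 := Matrix.mul_nonsing_inv _ (isUnit_iff_ne_zero.2 dne)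
  have ha' : a' = d' • (f t)⁻¹ - a t * f' * (f t)⁻¹ := by
    have h3 := congrArg (fun M => M * (f t)⁻¹) key
    simp only [Matrix.add_mul, Matrix.smul_mul, Matrix.one_mul, Matrix.mul_assoc, hmulinv,
      Matrix.mul_one] at h3
    rw [← Matrix.mul_assoc] at h3
    linear_combination (norm := module) h3
  have hiF : (f t)⁻¹ = (d t)⁻¹ • a t := by
    rw [Matrix.inv_def, Ring.inverse_eq_inv]
  have hfinal : HasDerivAt (fun s => (d s)⁻¹ • a s)
      ((d t)⁻¹ • a' + (-d' / d t ^ 2) • a t) t := (hd.inv dne).smul ha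
  have hfun : (fun s => (f s)⁻¹) = fun s => (d s)⁻¹ • a s := by
    funext s; rw [Matrix.inv_def, Ring.inverse_eq_inv]
  rw [hfun]
  convert hfinal using 1
  rw [ha', hiF]
  simp only [smul_sub, smul_smul, Matrix.smul_mul, Matrix.mul_smul, smul_mul_assoc,
    mul_smul_comm]
  match_scalars
  field_simp
  ring

/-- Paper's Proposition 2.3: if `Ξ(t) = Ψ(T, t)` solves `Ξ' = -Ξ Â`, `Ξ(T) = I`, where
`Â` is the block matrix `[[A + B Φ₀, B], [-(Φ₀ A + C Φ₀ + Φ₀ B Φ₀ + D), -(C + Φ₀ B)]]`,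
and the lower-right block `Ξ₂₂(t)` is invertible on `[0, T]`, then
`φ(t) := Φ₀ - Ξ₂₂(t)⁻¹ * Ξ₂₁(t)` solves the Riccati terminal value problem
`φ' + φ A + C φ + φ B φ + D = 0`, `φ(T) = Φ₀`. -/
theorem riccati_via_transition_matrix
    {n m : ℕ} {T : ℝ} (hT : 0 < T)
    (A : ℝ → Matrix (Fin n) (Fin n) ℝ) (B : ℝ → Matrix (Fin n) (Fin m) ℝ)
    (C : ℝ → Matrix (Fin m) (Fin m) ℝ) (D : ℝ → Matrix (Fin m) (Fin n) ℝ)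
    (hA : ContinuousOn A (Icc 0 T)) (hB : ContinuousOn B (Icc 0 T))
    (hC : ContinuousOn C (Icc 0 T)) (hD : ContinuousOn D (Icc 0 T))
    (Φ₀ : Matrix (Fin m) (Fin n) ℝ)
    (Ahat : ℝ → Matrix (Fin n ⊕ Fin m) (Fin n ⊕ Fin m) ℝ)
    (hAhat : ∀ t, Ahat t =
      Matrix.fromBlocks (A t + B t * Φ₀) (B t)
        (-(Φ₀ * A t + C t * Φ₀ + Φ₀ * B t * Φ₀ + D t)) (-(C t + Φ₀ * B t)))
    (Ξ : ℝ → Matrix (Fin n ⊕ Fin m) (Fin n ⊕ Fin m) ℝ)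
    (hΞ : ∀ t ∈ Icc (0 : ℝ) T, HasDerivAt Ξ (-(Ξ t * Ahat t)) t)
    (hΞT : Ξ T = 1)
    (hinv : ∀ t ∈ Icc (0 : ℝ) T, IsUnit ((Ξ t).toBlocks₂₂)) :
    (∀ t ∈ Icc (0 : ℝ) T,
      HasDerivAt (fun s => Φ₀ - ((Ξ s).toBlocks₂₂)⁻¹ * (Ξ s).toBlocks₂₁)
        (-((Φ₀ - ((Ξ t).toBlocks₂₂)⁻¹ * (Ξ t).toBlocks₂₁) * A t
            + C t * (Φ₀ - ((Ξ t).toBlocks₂₂)⁻¹ * (Ξ t).toBlocks₂₁)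
            + (Φ₀ - ((Ξ t).toBlocks₂₂)⁻¹ * (Ξ t).toBlocks₂₁) * B t
              * (Φ₀ - ((Ξ t).toBlocks₂₂)⁻¹ * (Ξ t).toBlocks₂₁)
            + D t)) t)
    ∧ Φ₀ - ((Ξ T).toBlocks₂₂)⁻¹ * (Ξ T).toBlocks₂₁ = Φ₀ := by
  constructor
  · intro t ht
    set F : ℝ → Matrix (Fin m) (Fin m) ℝ := fun s => (Ξ s).toBlocks₂₂ with hF_def
    set G : ℝ → Matrix (Fin m) (Fin n) ℝ := fun s => (Ξ s).toBlocks₂₁ with hG_def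
    -- block computation
    have e21 : ∀ s, (Ξ s * Ahat s).toBlocks₂₁
        = G s * (A s + B s * Φ₀)
          + F s * (-(Φ₀ * A s + C s * Φ₀ + Φ₀ * B s * Φ₀ + D s)) := by
      intro s
      conv_lhs => rw [← Matrix.fromBlocks_toBlocks (Ξ s), hAhat s, Matrix.fromBlocks_multiply]
      rw [Matrix.toBlocks_fromBlocks₂₁]
    have e22 : ∀ s, (Ξ s * Ahat s).toBlocks₂₂
        = G s * B s + F s * (-(C s + Φ₀ * B s)) := by
      intro s
      conv_lhs => rw [← Matrix.fromBlocks_toBlocks (Ξ s), hAhat s, Matrix.fromBlocks_multiply]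
      rw [Matrix.toBlocks_fromBlocks₂₂]
    -- derivatives of blocks
    have hG' : HasDerivAt G (-(G t * (A t + B t * Φ₀)
        + F t * (-(Φ₀ * A t + C t * Φ₀ + Φ₀ * B t * Φ₀ + D t)))) t := by
      rw [← e21 t, matrix_hasDerivAt_iff]
      intro i j
      exact matrix_hasDerivAt_iff.1 (hΞ t ht) (Sum.inr i) (Sum.inl j)
    have hF' : HasDerivAt F (-(G t * B t + F t * (-(C t + Φ₀ * B t)))) t := by
      rw [← e22 t, matrix_hasDerivAt_iff]
      intro i j
      exact matrix_hasDerivAt_iff.1 (hΞ t ht) (Sum.inr i) (Sum.inr j)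
    have hFt := hinv t ht
    have hFinv := hasDerivAt_matrix_inv hF' hFt
    have hmain := ((hFinv.matrix_mul hG').const_sub Φ₀)
    refine hmain.congr_deriv (Eq.symm ?_)
    have hiFF : (F t)⁻¹ * F t = 1 :=
      Matrix.nonsing_inv_mul _ ((Matrix.isUnit_iff_isUnit_det _).1 hFt)
    simp only [Matrix.mul_add, Matrix.add_mul, Matrix.mul_sub, Matrix.sub_mul,
      Matrix.neg_mul, Matrix.mul_neg, neg_neg, ← Matrix.mul_assoc, hiFF, Matrix.one_mul,
      neg_add_rev, neg_sub]
    abel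
  · rw [hΞT]
    have h21 : (1 : Matrix (Fin n ⊕ Fin m) (Fin n ⊕ Fin m) ℝ).toBlocks₂₁ = 0 := by
      rw [← Matrix.fromBlocks_one, Matrix.toBlocks_fromBlocks₂₁]
    rw [h21, Matrix.mul_zero, sub_zero]
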